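/- For any real z and any ε > 0, |z|³ - z³·tanh(z³/ε) ≤ 0.2785·ε. -/
import Mathlib

open Real

lemma exp_lb (a L : ℝ) (ha : 0 ≤ a)
    (h : L ≤ ∑ i ∈ Finset.range 10, a ^ i / i.factorial) : L ≤ Real.exp a :=
  h.trans (Real.sum_le_exp_of_nonneg ha 10)

lemma exp127 : (3.5608:ℝ) ≤ Real.exp 1.27 := by
  apply exp_lb _ _ (by norm_num)
  simp [Finset.sum_range_succ, Nat.factorial]
  norm_num

lemma exp129 : (3.6327:ℝ) ≤ Real.exp 1.29 := by
  apply exp_lb _ _ (by norm_num)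
  simp [Finset.sum_range_succ, Nat.factorial]
  norm_num

lemma key (s : ℝ) (hs : 0 ≤ s) : s ≤ 0.2785 * (Real.exp s + 1) := by
  rcases le_total s 0.6 with h | h
  · nlinarith [Real.add_one_le_exp s]
  rcases le_total s 1.28 with h2 | h2
  · have h1 : Real.exp 1.27 * (s - 0.27) ≤ Real.exp s := by
      have := Real.add_one_le_exp (s - 1.27)
      calc Real.exp 1.27 * (s - 0.27) = Real.exp 1.27 * ((s - 1.27) + 1) := by ring
        _ ≤ Real.exp 1.27 * Real.exp (s - 1.27) := by
            nlinarith [Real.exp_pos (1.27:ℝ)]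
        _ = Real.exp s := by rw [← Real.exp_add]; norm_num
    nlinarith [exp127, Real.exp_pos (1.27:ℝ)]
  · have h1 : Real.exp 1.29 * (s - 0.29) ≤ Real.exp s := by
      have := Real.add_one_le_exp (s - 1.29)
      calc Real.exp 1.29 * (s - 0.29) = Real.exp 1.29 * ((s - 1.29) + 1) := by ring
        _ ≤ Real.exp 1.29 * Real.exp (s - 1.29) := by
            nlinarith [Real.exp_pos (1.29:ℝ)]
        _ = Real.exp s := by rw [← Real.exp_add]; norm_num
    nlinarith [exp129, Real.exp_pos (1.29:ℝ)]

lemma tanh_form (y t : ℝ) : y - y * Real.tanh t = 2 * y / (Real.exp (2 * t) + 1) := by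
  rw [Real.tanh_eq_sinh_div_cosh, Real.cosh_eq, Real.sinh_eq]
  have he : (0:ℝ) < Real.exp t := Real.exp_pos t
  have hsq : Real.exp (2 * t) = Real.exp t * Real.exp t := by
    rw [two_mul, Real.exp_add]
  have hme : Real.exp (-t) = (Real.exp t)⁻¹ := Real.exp_neg t
  rw [hsq, hme]
  have hne : Real.exp t + (Real.exp t)⁻¹ ≠ 0 := by positivity
  field_simp
  ring

lemma abs_sub_tanh (x ε : ℝ) (hε : 0 < ε) :
    |x| - x * Real.tanh (x / ε) ≤ 0.2785 * ε := by
  have main : ∀ y : ℝ, 0 ≤ y → y - y * Real.tanh (y / ε) ≤ 0.2785 * ε := by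
    intro y hy
    rw [tanh_form]
    set t := y / ε with ht
    have htn : 0 ≤ t := div_nonneg hy hε.le
    have hs := key (2 * t) (by linarith)
    have hden : (0:ℝ) < Real.exp (2 * t) + 1 := by positivity
    rw [div_le_iff₀ hden]
    have hyt : y = t * ε := by rw [ht]; field_simp
    calc 2 * y = (2 * t) * ε := by rw [hyt]; ring
      _ ≤ (0.2785 * (Real.exp (2 * t) + 1)) * ε :=
          mul_le_mul_of_nonneg_right hs hε.le
      _ = 0.2785 * ε * (Real.exp (2 * t) + 1) := by ring
  rcases le_total 0 x with hx | hx
  · simpa [abs_of_nonneg hx] using main x hx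
  · have h2 := main (-x) (by linarith)
    have hodd : Real.tanh (-x / ε) = - Real.tanh (x / ε) := by
      rw [neg_div, Real.tanh_neg]
    rw [hodd] at h2
    rw [abs_of_nonpos hx]
    linarith

theorem cube_tanh_bound (z ε : ℝ) (hε : 0 < ε) :
    |z| ^ 3 - z ^ 3 * Real.tanh (z ^ 3 / ε) ≤ 0.2785 * ε := by
  have := abs_sub_tanh (z ^ 3) ε hε
  rwa [abs_pow] at this
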